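/- Let G = (N, T, P, S) be an FGG in which Ω(ℓ) is a finite set for every node label ℓ. For a nonterminal X with type(X) = ℓ₁⋯ℓ_k, let Ξ_X = Ω(ℓ₁) × ⋯ × Ω(ℓ_k). Let ψ* be the least fixed point in [0, ∞] of the monotone operator T defined by (Tψ)_X(ξ) = Σ_{(X → R) ∈ P} Σ_{ξ' assignment of R with ξ'(ext_R) = ξ} ( Π_{terminal edges e of R} F(lab^E(e))(ξ'(att(e))) · Π_{nonterminal edges e of R} ψ_{lab^E(e)}(ξ'(att(e))) ). Then for every nonterminal X and every ξ ∈ Ξ_X, ψ*_X(ξ) equals the sum-product of all X-type derivations whose external nodes are assigned ξ: ψ*_X(ξ) = Σ_{D ∈ D(G, X)} Σ_{ξ' assignment of the derived graph of D with ξ' restricted to the external nodes equal to ξ} w_D(ξ'). -/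

import Mathlib

open scoped ENNReal Classical

structure Fragment (LV LE : Type) (htype : LE → List LV) where
  V : Finset ℕ
  E : Finset ℕ
  att : ℕ → List ℕ
  labV : ℕ → LV
  labE : ℕ → LE
  ext : List ℕ
  att_mem : ∀ e ∈ E, ∀ v ∈ att e, v ∈ V
  wt : ∀ e ∈ E, (att e).map labV = htype (labE e)
  ext_mem : ∀ v ∈ ext, v ∈ V

structure HRG (LV LE : Type) (htype : LE → List LV) where
  N : Set LE
  T : Set LE
  finN : N.Finite
  finT : T.Finite
  disj : Disjoint N T
  P : Type
  finP : Finite P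
  lhs : P → LE
  lhs_mem : ∀ π, lhs π ∈ N
  rhs : P → Fragment LV LE htype
  rhs_lab : ∀ π, ∀ e ∈ (rhs π).E, (rhs π).labE e ∈ N ∪ T
  rhs_ext : ∀ π, ((rhs π).ext).map (rhs π).labV = htype (lhs π)
  S : LE
  S_mem : S ∈ N
  S_type : htype S = []

variable {LV LE : Type} {htype : LE → List LV}

inductive Deriv (G : HRG LV LE htype) : LE → Type
  | node (π : G.P)
      (children : ∀ e, e ∈ (G.rhs π).E → (G.rhs π).labE e ∈ G.N →
        Deriv G ((G.rhs π).labE e)) :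
      Deriv G (G.lhs π)

structure AHyper (LV LE : Type) (htype : LE → List LV) where
  V : Type
  E : Type
  finV : Finite V
  finE : Finite E
  att : E → List V
  labV : V → LV
  labE : E → LE
  wt : ∀ e, (att e).map labV = htype (labE e)
  ext : List V

/-- Mapping a function over a `pmap` is an ordinary `map` when the result is
proof-irrelevant. -/
theorem List.map_pmap_eq_map {α β γ : Type*} {p : α → Prop} (l : List α)
    (H : ∀ a ∈ l, p a) (f : ∀ a, p a → β) (g : β → γ) (g' : α → γ)
    (hfg : ∀ a ha, g (f a ha) = g' a) : (l.pmap f H).map g = l.map g' := by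
  induction l with
  | nil => simp
  | cons a l ih =>
      simp only [List.pmap, List.map_cons, hfg]
      exact congrArg _ (ih (fun x hx => H x (List.mem_cons_of_mem _ hx)))

namespace Fragment

variable (R : Fragment LV LE htype) (NT : Set LE)
  (child : ∀ e, e ∈ R.E → R.labE e ∈ NT → AHyper LV LE htype)
  (hchild : ∀ e he hn, ((child e he hn).ext).map (child e he hn).labV = htype (R.labE e))

/-- Replacement of the `NT`-labeled edges of `R` by the given hypergraphs,
identifying the `i`-th endpoint of each replaced edge with the `i`-th external
node of the corresponding replacement graph. -/
noncomputable def replace : AHyper LV LE htype :=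
  letI C : ∀ _p : {e : ℕ // e ∈ R.E ∧ R.labE e ∈ NT}, AHyper LV LE htype :=
    fun p => child p.1 p.2.1 p.2.2
  letI V0 : Type := {v : ℕ // v ∈ R.V} ⊕ Σ p : {e : ℕ // e ∈ R.E ∧ R.labE e ∈ NT}, (C p).V
  letI rel : V0 → V0 → Prop := fun a b =>
    ∃ (p : {e : ℕ // e ∈ R.E ∧ R.labE e ∈ NT}) (i : ℕ)
      (hi : i < (R.att p.1).length) (hv : (R.att p.1).get ⟨i, hi⟩ ∈ R.V)
      (hj : i < (C p).ext.length),
      a = Sum.inl ⟨(R.att p.1).get ⟨i, hi⟩, hv⟩ ∧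
      b = Sum.inr ⟨p, (C p).ext.get ⟨i, hj⟩⟩
  { V := Quot rel
    E := {e : ℕ // e ∈ R.E ∧ R.labE e ∉ NT} ⊕
      Σ p : {e : ℕ // e ∈ R.E ∧ R.labE e ∈ NT}, (C p).E
    finV := by
      haveI : ∀ p : {e : ℕ // e ∈ R.E ∧ R.labE e ∈ NT}, Finite (C p).V :=
        fun p => (C p).finV
      haveI : Finite {e : ℕ // e ∈ R.E ∧ R.labE e ∈ NT} :=
        (R.E.finite_toSet.subset (fun e he => he.1)).to_subtype
      haveI : Finite V0 := by infer_instance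
      exact Finite.of_surjective (Quot.mk rel) (fun q => Quot.exists_rep q)
    finE := by
      haveI : ∀ p : {e : ℕ // e ∈ R.E ∧ R.labE e ∈ NT}, Finite (C p).E :=
        fun p => (C p).finE
      haveI : Finite {e : ℕ // e ∈ R.E ∧ R.labE e ∈ NT} :=
        (R.E.finite_toSet.subset (fun e he => he.1)).to_subtype
      haveI : Finite {e : ℕ // e ∈ R.E ∧ R.labE e ∉ NT} :=
        (R.E.finite_toSet.subset (fun e he => he.1)).to_subtype
      infer_instance
    att := fun e => match e with
      | Sum.inl q => (R.att q.1).pmap (fun v h => Quot.mk rel (Sum.inl ⟨v, h⟩))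
          (R.att_mem q.1 q.2.1)
      | Sum.inr q => ((C q.1).att q.2).map (fun v => Quot.mk rel (Sum.inr ⟨q.1, v⟩))
    labV := Quot.lift (Sum.elim (fun v => R.labV v.1) (fun q => (C q.1).labV q.2)) (by
      rintro a b ⟨p, i, hi, hv, hj, rfl, rfl⟩
      simp only [Sum.elim_inl, Sum.elim_inr, List.get_eq_getElem]
      have h1 : ((R.att p.1).map R.labV)[i]? = (htype (R.labE p.1))[i]? := by
        rw [R.wt p.1 p.2.1]
      have h2 : ((C p).ext.map (C p).labV)[i]? = (htype (R.labE p.1))[i]? := by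
        rw [hchild p.1 p.2.1 p.2.2]
      rw [List.getElem?_map, List.getElem?_eq_getElem hi] at h1
      rw [List.getElem?_map, List.getElem?_eq_getElem hj] at h2
      exact Option.some.inj (h1.trans h2.symm))
    labE := fun e => match e with
      | Sum.inl q => R.labE q.1
      | Sum.inr q => (C q.1).labE q.2
    wt := by
      rintro (q | q)
      · dsimp only
        rw [← R.wt q.1 q.2.1]
        exact List.map_pmap_eq_map _ _ _ _ _ (fun a ha => rfl)
      · dsimp only
        simp only [List.map_map]
        exact (C q.1).wt q.2
    ext := R.ext.pmap (fun v h => Quot.mk rel (Sum.inl ⟨v, h⟩)) R.ext_mem }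

theorem replace_ext_map :
    ((R.replace NT child hchild).ext).map (R.replace NT child hchild).labV =
      R.ext.map R.labV := by
  simp only [replace]
  exact List.map_pmap_eq_map _ _ _ _ _ (fun a ha => rfl)

end Fragment

/-- The derived graph of a derivation tree, together with the fact that the
labels of its external nodes agree with the type of the derived nonterminal. -/
noncomputable def HRG.deriveA (G : HRG LV LE htype) :
    ∀ {X : LE}, Deriv G X → {H : AHyper LV LE htype // H.ext.map H.labV = htype X}
  | _, .node π c =>
      ⟨Fragment.replace (G.rhs π) G.N (fun e he hn => (G.deriveA (c e he hn)).1)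
          (fun e he hn => (G.deriveA (c e he hn)).2),
        by rw [Fragment.replace_ext_map]; exact G.rhs_ext π⟩

/-- The derived graph of a derivation tree. -/
noncomputable def HRG.derive (G : HRG LV LE htype) {X : LE} (D : Deriv G X) :
    AHyper LV LE htype :=
  (G.deriveA D).1

/-- A factor graph grammar: an HRG together with domains for the node labels
and factor functions for the (terminal) edge labels. -/
structure FGG (LV LE : Type) (htype : LE → List LV) (W : Type)
    extends HRG LV LE htype where
  Ω : LV → Set W
  F : LE → List W → NNReal

variable {W : Type}

/-- Assignments of a hypergraph: maps from nodes to values in the domains. -/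
def AHyper.Assign (Ω : LV → Set W) (H : AHyper LV LE htype) : Type :=
  {ξ : H.V → W // ∀ v, ξ v ∈ Ω (H.labV v)}

/-- The weight of an assignment: the product, over all terminal-labeled
hyperedges, of the factor function applied to the values at the endpoints. -/
noncomputable def AHyper.weight (Tset : Set LE) (F : LE → List W → NNReal)
    (H : AHyper LV LE htype) (ξ : H.V → W) : ℝ≥0∞ :=
  ∏ᶠ e : {e : H.E // H.labE e ∈ Tset},
    (F (H.labE e.1) ((H.att e.1).map ξ) : ℝ≥0∞)

/-- The sum–product of a factor graph grammar. -/
noncomputable def FGG.Z (G : FGG LV LE htype W) : ℝ≥0∞ :=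
  ∑' D : Deriv G.toHRG G.S,
    ∑' ξ : (G.toHRG.derive D).Assign G.Ω,
      (G.toHRG.derive D).weight G.T G.F ξ.1

/-- Assignments of the nodes of a fragment. -/
def Fragment.Assign (Ω : LV → Set W) (R : Fragment LV LE htype) : Type :=
  {ξ : {v : ℕ // v ∈ R.V} → W // ∀ v, ξ v ∈ Ω (R.labV v.1)}

/-- The values of an assignment at the external nodes of a fragment. -/
def Fragment.extVals (R : Fragment LV LE htype) (ξ : {v : ℕ // v ∈ R.V} → W) :
    List W :=
  R.ext.pmap (fun v h => ξ ⟨v, h⟩) R.ext_mem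

/-- The values of an assignment at the endpoints of an edge of a fragment. -/
def Fragment.attVals (R : Fragment LV LE htype) (ξ : {v : ℕ // v ∈ R.V} → W)
    (e : ℕ) (he : e ∈ R.E) : List W :=
  (R.att e).pmap (fun v h => ξ ⟨v, h⟩) (R.att_mem e he)

/-- The monotone operator, on `[0,∞]`-valued families `ψ_X(ξ)` indexed by
edge labels `X` and assignments `ξ` to the endpoints of `X`, whose defining
equations are
`ψ_X(ξ) = Σ_{(X→R) ∈ P} Σ_{ξ' : assignment of R with ξ'(ext_R) = ξ}
  (Π_{terminal e ∈ R} F(lab(e))(ξ'(att e))) · (Π_{nonterminal e ∈ R} ψ_{lab(e)}(ξ'(att e)))`. -/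
noncomputable def FGG.sysOp (G : FGG LV LE htype W) :
    (LE → List W → ℝ≥0∞) → (LE → List W → ℝ≥0∞) := fun ψ X ξ =>
  ∑' π : {π : G.P // G.lhs π = X},
    ∑' ξ' : {ξ' : (G.rhs π.1).Assign G.Ω // (G.rhs π.1).extVals ξ'.1 = ξ},
      (∏ᶠ e : {e : ℕ // e ∈ (G.rhs π.1).E ∧ (G.rhs π.1).labE e ∈ G.T},
          (G.F ((G.rhs π.1).labE e.1)
            ((G.rhs π.1).attVals ξ'.1.1 e.1 e.2.1) : ℝ≥0∞)) *
      (∏ᶠ e : {e : ℕ // e ∈ (G.rhs π.1).E ∧ (G.rhs π.1).labE e ∈ G.N},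
          ψ ((G.rhs π.1).labE e.1) ((G.rhs π.1).attVals ξ'.1.1 e.1 e.2.1))

noncomputable def Deriv.depth {G : HRG LV LE htype} : ∀ {X : LE}, Deriv G X → ℕ
  | _, .node π c => 1 + ((G.rhs π).E.attach).sup (fun e =>
      if h : (G.rhs π).labE e.1 ∈ G.N then (c e.1 e.2 h).depth else 0)

def derivEquiv (G : HRG LV LE htype) (X : LE) :
    Deriv G X ≃ Σ π : {π : G.P // G.lhs π = X},
      ∀ e : {e : ℕ // e ∈ (G.rhs π.1).E ∧ (G.rhs π.1).labE e ∈ G.N},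
        Deriv G ((G.rhs π.1).labE e.1) where
  toFun D := match D with
    | .node π c => ⟨⟨π, rfl⟩, fun e => c e.1 e.2.1 e.2.2⟩
  invFun p := p.1.2 ▸ Deriv.node p.1.1 (fun e he hn => p.2 ⟨e, he, hn⟩)
  left_inv D := by cases D; rfl
  right_inv p := by rcases p with ⟨⟨π, rfl⟩, f⟩; rfl

theorem tsum_pi_prod_fin : ∀ (n : ℕ) (S : Fin n → Type) (g : ∀ i, S i → ℝ≥0∞),
    ∑' f : ∀ i, S i, ∏ i, g i (f i) = ∏ i, ∑' x : S i, g i x := by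
  intro n
  induction n with
  | zero =>
      intro S g
      haveI : Unique (∀ i : Fin 0, S i) := ⟨⟨fun i => i.elim0⟩, fun f => funext fun i => i.elim0⟩
      rw [tsum_eq_single (default : ∀ i : Fin 0, S i) (fun b hb => absurd (Subsingleton.elim b default) hb)]
      simp
  | succ n ih =>
      intro S g
      rw [← Equiv.tsum_eq (Fin.consEquiv S)]
      rw [ENNReal.tsum_prod']
      have : ∀ (a : S 0) (f : ∀ i : Fin n, S i.succ),
          (∏ i, g i ((Fin.consEquiv S) (a, f) i)) = g 0 a * ∏ i : Fin n, g i.succ (f i) := by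
        intro a f
        rw [Fin.prod_univ_succ]
        simp [Fin.consEquiv]
      simp only [this]
      rw [Fin.prod_univ_succ]
      calc ∑' (a : S 0), ∑' (f : ∀ i : Fin n, S i.succ), g 0 a * ∏ i : Fin n, g i.succ (f i)
          = ∑' (a : S 0), g 0 a * ∑' (f : ∀ i : Fin n, S i.succ), ∏ i : Fin n, g i.succ (f i) := by
            simp_rw [ENNReal.tsum_mul_left]
        _ = (∑' (a : S 0), g 0 a) * ∑' (f : ∀ i : Fin n, S i.succ), ∏ i : Fin n, g i.succ (f i) := by
            rw [ENNReal.tsum_mul_right]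
        _ = _ := by rw [ih]

theorem tsum_pi_prod {ι : Type*} [Fintype ι] (S : ι → Type) (g : ∀ i, S i → ℝ≥0∞) :
    ∑' f : ∀ i, S i, ∏ i, g i (f i) = ∏ i, ∑' x : S i, g i x := by
  classical
  obtain ⟨n, ⟨e⟩⟩ : ∃ n, Nonempty (ι ≃ Fin n) := ⟨Fintype.card ι, ⟨Fintype.equivFin ι⟩⟩
  rw [← Equiv.tsum_eq (Equiv.piCongrLeft S e.symm)]
  have h1 : ∀ c : ∀ j : Fin n, S (e.symm j),
      (∏ i, g i ((Equiv.piCongrLeft S e.symm) c i)) = ∏ j : Fin n, g (e.symm j) (c j) := by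
    intro c
    rw [← e.symm.prod_comp (fun i => g i ((Equiv.piCongrLeft S e.symm) c i))]
    exact Fintype.prod_congr _ _ fun j => by rw [Equiv.piCongrLeft_apply_apply]
  simp only [h1]
  rw [tsum_pi_prod_fin n (fun j => S (e.symm j)) (fun j x => g (e.symm j) x)]
  exact e.symm.prod_comp (fun i => ∑' x : S i, g i x)

section ReplaceLemmas

variable {W : Type} (Ω : LV → Set W)
variable (R : Fragment LV LE htype) (NT : Set LE)
  (child : ∀ e, e ∈ R.E → R.labE e ∈ NT → AHyper LV LE htype)
  (hchild : ∀ e he hn, ((child e he hn).ext).map (child e he hn).labV = htype (R.labE e))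

/-- The relation used in `Fragment.replace`. -/
def repRel :
    ({v : ℕ // v ∈ R.V} ⊕ Σ p : {e : ℕ // e ∈ R.E ∧ R.labE e ∈ NT},
      (child p.1 p.2.1 p.2.2).V) →
    ({v : ℕ // v ∈ R.V} ⊕ Σ p : {e : ℕ // e ∈ R.E ∧ R.labE e ∈ NT},
      (child p.1 p.2.1 p.2.2).V) → Prop := fun a b =>
  ∃ (p : {e : ℕ // e ∈ R.E ∧ R.labE e ∈ NT}) (i : ℕ)
    (hi : i < (R.att p.1).length) (hv : (R.att p.1).get ⟨i, hi⟩ ∈ R.V)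
    (hj : i < (child p.1 p.2.1 p.2.2).ext.length),
    a = Sum.inl ⟨(R.att p.1).get ⟨i, hi⟩, hv⟩ ∧
    b = Sum.inr ⟨p, (child p.1 p.2.1 p.2.2).ext.get ⟨i, hj⟩⟩

theorem replace_V :
    (R.replace NT child hchild).V = Quot (repRel R NT child) := rfl

include hchild in
theorem ext_len (p : {e : ℕ // e ∈ R.E ∧ R.labE e ∈ NT}) :
    (child p.1 p.2.1 p.2.2).ext.length = (R.att p.1).length := by
  have h1 := congrArg List.length (hchild p.1 p.2.1 p.2.2)
  have h2 := congrArg List.length (R.wt p.1 p.2.1)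
  simp only [List.length_map] at h1 h2
  exact h1.trans h2.symm

theorem attVals_length (ξ' : {v : ℕ // v ∈ R.V} → W) (e : ℕ) (he : e ∈ R.E) :
    (R.attVals ξ' e he).length = (R.att e).length := by
  unfold Fragment.attVals; exact List.length_pmap

/-- Glue an assignment of `R` with assignments of the replacement graphs into an
assignment of the replaced graph. -/
noncomputable def glue (ξ' : {v : ℕ // v ∈ R.V} → W)
    (η : ∀ p : {e : ℕ // e ∈ R.E ∧ R.labE e ∈ NT}, (child p.1 p.2.1 p.2.2).V → W)
    (hcomp : ∀ p, ((child p.1 p.2.1 p.2.2).ext).map (η p) = R.attVals ξ' p.1 p.2.1) :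
    (R.replace NT child hchild).V → W :=
  Quot.lift (Sum.elim ξ' (fun q => η q.1 q.2)) (by
    rintro a b ⟨p, i, hi, hv, hj, rfl, rfl⟩
    simp only [Sum.elim_inl, Sum.elim_inr]
    have h := congrArg (fun l => l[i]?) (hcomp p)
    have hlt : i < (R.attVals ξ' p.1 p.2.1).length := by
      rw [attVals_length]; exact hi
    simp only [List.getElem?_map, List.getElem?_eq_getElem hj,
      List.getElem?_eq_getElem hlt, Option.map_some] at h
    have h := Option.some.inj h
    rw [show (R.attVals ξ' p.1 p.2.1)[i] = ξ' ⟨(R.att p.1)[i], hv⟩ from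
      List.getElem_pmap _ _ hlt] at h
    exact h.symm)

theorem glue_inl (ξ' : {v : ℕ // v ∈ R.V} → W)
    (η : ∀ p : {e : ℕ // e ∈ R.E ∧ R.labE e ∈ NT}, (child p.1 p.2.1 p.2.2).V → W)
    (hcomp : ∀ p, ((child p.1 p.2.1 p.2.2).ext).map (η p) = R.attVals ξ' p.1 p.2.1)
    (v : {v : ℕ // v ∈ R.V}) :
    glue R NT child hchild ξ' η hcomp (Quot.mk _ (Sum.inl v)) = ξ' v := rfl

theorem glue_inr (ξ' : {v : ℕ // v ∈ R.V} → W)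
    (η : ∀ p : {e : ℕ // e ∈ R.E ∧ R.labE e ∈ NT}, (child p.1 p.2.1 p.2.2).V → W)
    (hcomp : ∀ p, ((child p.1 p.2.1 p.2.2).ext).map (η p) = R.attVals ξ' p.1 p.2.1)
    (p : {e : ℕ // e ∈ R.E ∧ R.labE e ∈ NT}) (u : (child p.1 p.2.1 p.2.2).V) :
    glue R NT child hchild ξ' η hcomp (Quot.mk _ (Sum.inr ⟨p, u⟩)) = η p u := rfl

theorem replace_ext_def :
    (R.replace NT child hchild).ext =
      R.ext.pmap (fun v h => Quot.mk (repRel R NT child) (Sum.inl ⟨v, h⟩)) R.ext_mem := rfl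

theorem replace_labV_inl (v : {v : ℕ // v ∈ R.V}) :
    (R.replace NT child hchild).labV (Quot.mk (repRel R NT child) (Sum.inl v)) = R.labV v.1 := rfl

theorem replace_labV_inr (p : {e : ℕ // e ∈ R.E ∧ R.labE e ∈ NT})
    (u : (child p.1 p.2.1 p.2.2).V) :
    (R.replace NT child hchild).labV (Quot.mk (repRel R NT child) (Sum.inr ⟨p, u⟩)) =
      (child p.1 p.2.1 p.2.2).labV u := rfl

theorem quot_sound_eq (p : {e : ℕ // e ∈ R.E ∧ R.labE e ∈ NT}) (i : ℕ)
    (hi : i < (R.att p.1).length) (hv : (R.att p.1)[i] ∈ R.V)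
    (hj : i < (child p.1 p.2.1 p.2.2).ext.length) :
    Quot.mk (repRel R NT child) (Sum.inl ⟨(R.att p.1)[i], hv⟩) =
      Quot.mk (repRel R NT child) (Sum.inr ⟨p, (child p.1 p.2.1 p.2.2).ext[i]⟩) :=
  Quot.sound ⟨p, i, hi, hv, hj, rfl, rfl⟩

/-- Assignments of the replaced graph with prescribed external values correspond to
pairs of an assignment of `R` with those external values together with, for each
replaced edge, an assignment of the replacement graph matching on the interface. -/
noncomputable def assignEquiv (ξ : List W) :
    (Σ ξ' : {ξ' : R.Assign Ω // R.extVals ξ'.1 = ξ},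
      ∀ p : {e : ℕ // e ∈ R.E ∧ R.labE e ∈ NT},
        {η : (child p.1 p.2.1 p.2.2).Assign Ω //
          ((child p.1 p.2.1 p.2.2).ext).map η.1 = R.attVals ξ'.1.1 p.1 p.2.1}) ≃
    {Ξ : (R.replace NT child hchild).Assign Ω //
      ((R.replace NT child hchild).ext).map Ξ.1 = ξ} where
  toFun x :=
    ⟨⟨glue R NT child hchild x.1.1.1 (fun p => (x.2 p).1.1) (fun p => (x.2 p).2), by
        intro q
        induction q using Quot.ind with
        | _ y =>
          rcases y with v | ⟨p, u⟩
          · exact x.1.1.2 v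
          · exact (x.2 p).1.2 u⟩, by
      erw [show ((R.replace NT child hchild).ext) =
        R.ext.pmap (fun v h => Quot.mk (repRel R NT child) (Sum.inl ⟨v, h⟩)) R.ext_mem from rfl,
        List.map_pmap]
      refine Eq.trans ?_ x.1.2
      show _ = R.ext.pmap (fun v h => x.1.1.1 ⟨v, h⟩) R.ext_mem
      exact List.pmap_congr_left R.ext (fun a ha h1 h2 => rfl)⟩
  invFun Ξ :=
    ⟨⟨⟨fun v => Ξ.1.1 (Quot.mk (repRel R NT child) (Sum.inl v)),
        fun v => Ξ.1.2 (Quot.mk (repRel R NT child) (Sum.inl v))⟩, by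
        refine Eq.trans ?_ Ξ.2
        show R.ext.pmap (fun v h => Ξ.1.1 (Quot.mk (repRel R NT child) (Sum.inl ⟨v, h⟩)))
          R.ext_mem = _
        exact (List.map_pmap _).symm⟩,
      fun p =>
        ⟨⟨fun u => Ξ.1.1 (Quot.mk (repRel R NT child) (Sum.inr ⟨p, u⟩)),
          fun u => Ξ.1.2 (Quot.mk (repRel R NT child) (Sum.inr ⟨p, u⟩))⟩, by
          apply List.ext_getElem
          · rw [List.length_map, ext_len R NT child hchild, attVals_length]
          · intro i hi1 hi2
            have hj : i < (child p.1 p.2.1 p.2.2).ext.length := by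
              rw [List.length_map] at hi1; exact hi1
            have hatt : i < (R.att p.1).length := by
              rwa [attVals_length] at hi2
            have hv : (R.att p.1)[i] ∈ R.V :=
              R.att_mem p.1 p.2.1 _ (List.getElem_mem hatt)
            rw [List.getElem_map,
              show (R.attVals _ p.1 p.2.1)[i] = Ξ.1.1 (Quot.mk (repRel R NT child)
                (Sum.inl ⟨(R.att p.1)[i], hv⟩)) from List.getElem_pmap _ _ hi2]
            exact congrArg Ξ.1.1 (quot_sound_eq R NT child p i hatt hv hj).symm⟩⟩
  left_inv x := rfl
  right_inv Ξ := by
    apply Subtype.ext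
    apply Subtype.ext
    funext q
    induction q using Quot.ind with
    | _ y => rcases y with v | ⟨p, u⟩ <;> rfl

theorem replace_att_inl (q : {e : ℕ // e ∈ R.E ∧ R.labE e ∉ NT}) :
    (R.replace NT child hchild).att (Sum.inl q) =
      (R.att q.1).pmap (fun v h => Quot.mk (repRel R NT child) (Sum.inl ⟨v, h⟩))
        (R.att_mem q.1 q.2.1) := rfl

theorem replace_att_inr (p : {e : ℕ // e ∈ R.E ∧ R.labE e ∈ NT})
    (u : (child p.1 p.2.1 p.2.2).E) :
    (R.replace NT child hchild).att (Sum.inr ⟨p, u⟩) =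
      ((child p.1 p.2.1 p.2.2).att u).map
        (fun v => Quot.mk (repRel R NT child) (Sum.inr ⟨p, v⟩)) := rfl

theorem replace_labE_inl (q : {e : ℕ // e ∈ R.E ∧ R.labE e ∉ NT}) :
    (R.replace NT child hchild).labE (Sum.inl q) = R.labE q.1 := rfl

theorem replace_labE_inr (p : {e : ℕ // e ∈ R.E ∧ R.labE e ∈ NT})
    (u : (child p.1 p.2.1 p.2.2).E) :
    (R.replace NT child hchild).labE (Sum.inr ⟨p, u⟩) =
      (child p.1 p.2.1 p.2.2).labE u := rfl

/-- If all labels lie in `Tset`, the weight is a product over all edges. -/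
theorem weight_eq_of_all {H : AHyper LV LE htype} (Tset : Set LE) (Fc : LE → List W → NNReal)
    (hall : ∀ e : H.E, H.labE e ∈ Tset) (Ξ : H.V → W) :
    H.weight Tset Fc Ξ = ∏ᶠ e : H.E, (Fc (H.labE e) ((H.att e).map Ξ) : ℝ≥0∞) :=
  finprod_comp_equiv (f := fun e => (Fc (H.labE e) ((H.att e).map Ξ) : ℝ≥0∞))
    (Equiv.subtypeUnivEquiv hall)

theorem glue_weight (Tset : Set LE) (Fc : LE → List W → NNReal)
    (hRlab : ∀ e ∈ R.E, R.labE e ∈ NT ∪ Tset) (hdisj : Disjoint NT Tset)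
    (hCterm : ∀ (p : {e : ℕ // e ∈ R.E ∧ R.labE e ∈ NT}) (u : (child p.1 p.2.1 p.2.2).E),
      (child p.1 p.2.1 p.2.2).labE u ∈ Tset)
    (ξ' : {v : ℕ // v ∈ R.V} → W)
    (η : ∀ p : {e : ℕ // e ∈ R.E ∧ R.labE e ∈ NT}, (child p.1 p.2.1 p.2.2).V → W)
    (hcomp : ∀ p, ((child p.1 p.2.1 p.2.2).ext).map (η p) = R.attVals ξ' p.1 p.2.1) :
    (R.replace NT child hchild).weight Tset Fc (glue R NT child hchild ξ' η hcomp) =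
      (∏ᶠ e : {e : ℕ // e ∈ R.E ∧ R.labE e ∈ Tset},
        (Fc (R.labE e.1) (R.attVals ξ' e.1 e.2.1) : ℝ≥0∞)) *
      ∏ᶠ p : {e : ℕ // e ∈ R.E ∧ R.labE e ∈ NT},
        (child p.1 p.2.1 p.2.2).weight Tset Fc (η p) := by
  classical
  have hall : ∀ e : (R.replace NT child hchild).E,
      (R.replace NT child hchild).labE e ∈ Tset := by
    refine Sum.rec (fun q => ?_) (fun s => ?_)
    · rcases hRlab q.1 q.2.1 with h | h
      · exact absurd h q.2.2
      · exact h
    · exact hCterm s.1 s.2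
  rw [weight_eq_of_all Tset Fc hall]
  haveI : Finite {e : ℕ // e ∈ R.E ∧ R.labE e ∉ NT} :=
    (R.E.finite_toSet.subset fun e he => he.1).to_subtype
  haveI : Finite {e : ℕ // e ∈ R.E ∧ R.labE e ∈ NT} :=
    (R.E.finite_toSet.subset fun e he => he.1).to_subtype
  haveI : Finite {e : ℕ // e ∈ R.E ∧ R.labE e ∈ Tset} :=
    (R.E.finite_toSet.subset fun e he => he.1).to_subtype
  haveI : ∀ p : {e : ℕ // e ∈ R.E ∧ R.labE e ∈ NT}, Finite (child p.1 p.2.1 p.2.2).E :=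
    fun p => (child p.1 p.2.1 p.2.2).finE
  letI : Fintype {e : ℕ // e ∈ R.E ∧ R.labE e ∉ NT} := Fintype.ofFinite _
  letI : Fintype {e : ℕ // e ∈ R.E ∧ R.labE e ∈ NT} := Fintype.ofFinite _
  letI : Fintype {e : ℕ // e ∈ R.E ∧ R.labE e ∈ Tset} := Fintype.ofFinite _
  letI : ∀ p : {e : ℕ // e ∈ R.E ∧ R.labE e ∈ NT}, Fintype (child p.1 p.2.1 p.2.2).E :=
    fun p => Fintype.ofFinite _
  rw [show (∏ᶠ e : (R.replace NT child hchild).E,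
        (Fc ((R.replace NT child hchild).labE e)
          (((R.replace NT child hchild).att e).map (glue R NT child hchild ξ' η hcomp)) :
          ℝ≥0∞)) =
      ∏ᶠ e : ({e : ℕ // e ∈ R.E ∧ R.labE e ∉ NT} ⊕
          Σ p : {e : ℕ // e ∈ R.E ∧ R.labE e ∈ NT}, (child p.1 p.2.1 p.2.2).E),
        (Fc ((R.replace NT child hchild).labE e)
          (((R.replace NT child hchild).att e).map (glue R NT child hchild ξ' η hcomp)) :
          ℝ≥0∞) from rfl,
    finprod_eq_prod_of_fintype, Fintype.prod_sum_type]
  congr 1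
  · -- terminal edges coming from R itself
    rw [← finprod_comp_equiv
      (Equiv.subtypeEquivRight (p := fun e => e ∈ R.E ∧ R.labE e ∉ NT)
        (q := fun e => e ∈ R.E ∧ R.labE e ∈ Tset)
        (fun e => ⟨fun h => ⟨h.1, (hRlab e h.1).resolve_left h.2⟩,
          fun h => ⟨h.1, fun hn => Set.disjoint_left.mp hdisj hn h.2⟩⟩)),
      ← finprod_eq_prod_of_fintype]
    apply finprod_congr
    intro q
    simp only [Equiv.subtypeEquivRight_apply]
    refine congrArg (fun t : NNReal => (t : ℝ≥0∞)) (congrArg₂ Fc rfl ?_)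
    erw [replace_att_inl, List.map_pmap]
    exact List.pmap_congr_left _ (fun a ha h1 h2 => rfl)
  · -- edges of the replacement graphs
    rw [← Finset.univ_sigma_univ, Finset.prod_sigma,
      show (∏ᶠ p : {e : ℕ // e ∈ R.E ∧ R.labE e ∈ NT},
          (child p.1 p.2.1 p.2.2).weight Tset Fc (η p)) =
        ∏ p : {e : ℕ // e ∈ R.E ∧ R.labE e ∈ NT},
          (child p.1 p.2.1 p.2.2).weight Tset Fc (η p) from finprod_eq_prod_of_fintype _]
    apply Finset.prod_congr rfl
    intro p _
    rw [weight_eq_of_all Tset Fc (hCterm p), finprod_eq_prod_of_fintype]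
    apply Finset.prod_congr rfl
    intro u _
    refine congrArg (fun t : NNReal => (t : ℝ≥0∞)) (congrArg₂ Fc rfl ?_)
    erw [replace_att_inr, List.map_map]
    exact List.map_congr_left (fun a ha => rfl)

theorem replace_tsum (Tset : Set LE) (Fc : LE → List W → NNReal)
    (hRlab : ∀ e ∈ R.E, R.labE e ∈ NT ∪ Tset) (hdisj : Disjoint NT Tset)
    (hCterm : ∀ (p : {e : ℕ // e ∈ R.E ∧ R.labE e ∈ NT}) (u : (child p.1 p.2.1 p.2.2).E),
      (child p.1 p.2.1 p.2.2).labE u ∈ Tset)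
    (ξ : List W) :
    (∑' Ξ : {Ξ : (R.replace NT child hchild).Assign Ω //
        ((R.replace NT child hchild).ext).map Ξ.1 = ξ},
      (R.replace NT child hchild).weight Tset Fc Ξ.1.1) =
    ∑' ξ' : {ξ' : R.Assign Ω // R.extVals ξ'.1 = ξ},
      (∏ᶠ e : {e : ℕ // e ∈ R.E ∧ R.labE e ∈ Tset},
        (Fc (R.labE e.1) (R.attVals ξ'.1.1 e.1 e.2.1) : ℝ≥0∞)) *
      ∏ᶠ p : {e : ℕ // e ∈ R.E ∧ R.labE e ∈ NT},
        ∑' η : {η : (child p.1 p.2.1 p.2.2).Assign Ω //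
            ((child p.1 p.2.1 p.2.2).ext).map η.1 = R.attVals ξ'.1.1 p.1 p.2.1},
          (child p.1 p.2.1 p.2.2).weight Tset Fc η.1.1 := by
  classical
  rw [← Equiv.tsum_eq (assignEquiv Ω R NT child hchild ξ), ENNReal.tsum_sigma']
  apply tsum_congr
  intro ξ'
  have hg : ∀ f : (∀ p : {e : ℕ // e ∈ R.E ∧ R.labE e ∈ NT},
      {η : (child p.1 p.2.1 p.2.2).Assign Ω //
        ((child p.1 p.2.1 p.2.2).ext).map η.1 = R.attVals ξ'.1.1 p.1 p.2.1}),
      (R.replace NT child hchild).weight Tset Fc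
          ((assignEquiv Ω R NT child hchild ξ ⟨ξ', f⟩).1.1) =
        (∏ᶠ e : {e : ℕ // e ∈ R.E ∧ R.labE e ∈ Tset},
          (Fc (R.labE e.1) (R.attVals ξ'.1.1 e.1 e.2.1) : ℝ≥0∞)) *
        ∏ᶠ p : {e : ℕ // e ∈ R.E ∧ R.labE e ∈ NT},
          (child p.1 p.2.1 p.2.2).weight Tset Fc (f p).1.1 :=
    fun f => glue_weight R NT child hchild Tset Fc hRlab hdisj hCterm
      ξ'.1.1 (fun p => (f p).1.1) (fun p => (f p).2)
  calc ∑' f, (R.replace NT child hchild).weight Tset Fc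
        ((assignEquiv Ω R NT child hchild ξ ⟨ξ', f⟩).1.1)
      = ∑' f : (∀ p : {e : ℕ // e ∈ R.E ∧ R.labE e ∈ NT},
          {η : (child p.1 p.2.1 p.2.2).Assign Ω //
            ((child p.1 p.2.1 p.2.2).ext).map η.1 = R.attVals ξ'.1.1 p.1 p.2.1}),
        (∏ᶠ e : {e : ℕ // e ∈ R.E ∧ R.labE e ∈ Tset},
          (Fc (R.labE e.1) (R.attVals ξ'.1.1 e.1 e.2.1) : ℝ≥0∞)) *
        ∏ᶠ p : {e : ℕ // e ∈ R.E ∧ R.labE e ∈ NT},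
          (child p.1 p.2.1 p.2.2).weight Tset Fc (f p).1.1 := tsum_congr hg
    _ = _ := by
        rw [ENNReal.tsum_mul_left]
        congr 1
        haveI : Finite {e : ℕ // e ∈ R.E ∧ R.labE e ∈ NT} :=
          (R.E.finite_toSet.subset fun e he => he.1).to_subtype
        letI : Fintype {e : ℕ // e ∈ R.E ∧ R.labE e ∈ NT} := Fintype.ofFinite _
        calc ∑' f : (∀ p : {e : ℕ // e ∈ R.E ∧ R.labE e ∈ NT},
              {η : (child p.1 p.2.1 p.2.2).Assign Ω //
                ((child p.1 p.2.1 p.2.2).ext).map η.1 = R.attVals ξ'.1.1 p.1 p.2.1}),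
            ∏ᶠ p : {e : ℕ // e ∈ R.E ∧ R.labE e ∈ NT},
              (child p.1 p.2.1 p.2.2).weight Tset Fc (f p).1.1
            = ∑' f : (∀ p : {e : ℕ // e ∈ R.E ∧ R.labE e ∈ NT},
              {η : (child p.1 p.2.1 p.2.2).Assign Ω //
                ((child p.1 p.2.1 p.2.2).ext).map η.1 = R.attVals ξ'.1.1 p.1 p.2.1}),
            ∏ p : {e : ℕ // e ∈ R.E ∧ R.labE e ∈ NT},
              (child p.1 p.2.1 p.2.2).weight Tset Fc (f p).1.1 :=
              tsum_congr fun f => finprod_eq_prod_of_fintype _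
          _ = ∏ p : {e : ℕ // e ∈ R.E ∧ R.labE e ∈ NT},
              ∑' η : {η : (child p.1 p.2.1 p.2.2).Assign Ω //
                ((child p.1 p.2.1 p.2.2).ext).map η.1 = R.attVals ξ'.1.1 p.1 p.2.1},
              (child p.1 p.2.1 p.2.2).weight Tset Fc η.1.1 :=
              tsum_pi_prod (S := fun p : {e : ℕ // e ∈ R.E ∧ R.labE e ∈ NT} =>
                  {η : (child p.1 p.2.1 p.2.2).Assign Ω //
                    ((child p.1 p.2.1 p.2.2).ext).map η.1 = R.attVals ξ'.1.1 p.1 p.2.1})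
                (fun p η => (child p.1 p.2.1 p.2.2).weight Tset Fc η.1.1)
          _ = _ := (finprod_eq_prod_of_fintype _).symm

end ReplaceLemmas

section FGGLemmas

variable {W : Type} (G : FGG LV LE htype W)

/-- Sum-product contribution of a single derivation with given external values. -/
noncomputable def FGG.inner {X : LE} (D : Deriv G.toHRG X) (ξ : List W) : ℝ≥0∞ :=
  ∑' ξ' : {ξ' : (G.toHRG.derive D).Assign G.Ω // ((G.toHRG.derive D).ext).map ξ'.1 = ξ},
    (G.toHRG.derive D).weight G.T G.F ξ'.1.1

/-- Sum-product over all derivations of a given type with given external values. -/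
noncomputable def FGG.psi (X : LE) (ξ : List W) : ℝ≥0∞ :=
  ∑' D : Deriv G.toHRG X, G.inner D ξ

theorem HRG.derive_lab (G' : HRG LV LE htype) :
    ∀ {X : LE} (D : Deriv G' X) (e : (G'.derive D).E), (G'.derive D).labE e ∈ G'.T
  | _, .node π c => by
      refine Sum.rec (fun q => ?_) (fun s => ?_)
      · exact (G'.rhs_lab π q.1 q.2.1).resolve_left q.2.2
      · exact G'.derive_lab (c s.1.1 s.1.2.1 s.1.2.2) s.2

theorem HRG.derive_node (G' : HRG LV LE htype) (π : G'.P)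
    (c : ∀ e, e ∈ (G'.rhs π).E → (G'.rhs π).labE e ∈ G'.N → Deriv G' ((G'.rhs π).labE e)) :
    G'.derive (Deriv.node π c) =
      Fragment.replace (G'.rhs π) G'.N (fun e he hn => G'.derive (c e he hn))
        (fun e he hn => (G'.deriveA (c e he hn)).2) := rfl

/-- Unfolding of the single-derivation sum-product along the root rule. -/
theorem FGG.inner_node (π : G.P)
    (c : ∀ e, e ∈ (G.rhs π).E → (G.rhs π).labE e ∈ G.N → Deriv G.toHRG ((G.rhs π).labE e))
    (ξ : List W) :
    G.inner (Deriv.node π c) ξ =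
      ∑' ξ' : {ξ' : (G.rhs π).Assign G.Ω // (G.rhs π).extVals ξ'.1 = ξ},
        (∏ᶠ e : {e : ℕ // e ∈ (G.rhs π).E ∧ (G.rhs π).labE e ∈ G.T},
          (G.F ((G.rhs π).labE e.1) ((G.rhs π).attVals ξ'.1.1 e.1 e.2.1) : ℝ≥0∞)) *
        ∏ᶠ p : {e : ℕ // e ∈ (G.rhs π).E ∧ (G.rhs π).labE e ∈ G.N},
          G.inner (c p.1 p.2.1 p.2.2) ((G.rhs π).attVals ξ'.1.1 p.1 p.2.1) :=
  replace_tsum G.Ω (G.rhs π) G.N (fun e he hn => G.toHRG.derive (c e he hn))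
    (fun e he hn => (G.toHRG.deriveA (c e he hn)).2) G.T G.F
    (G.rhs_lab π) G.disj (fun p u => G.toHRG.derive_lab (c p.1 p.2.1 p.2.2) u) ξ

/-- Splitting a sum over derivations along the root rule. -/
theorem FGG.tsum_deriv (X : LE) (f : Deriv G.toHRG X → ℝ≥0∞) :
    ∑' D, f D = ∑' π : {π : G.P // G.lhs π = X},
      ∑' c : (∀ p : {e : ℕ // e ∈ (G.rhs π.1).E ∧ (G.rhs π.1).labE e ∈ G.N},
        Deriv G.toHRG ((G.rhs π.1).labE p.1)),
        f ((derivEquiv G.toHRG X).symm ⟨π, c⟩) :=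
  ((Equiv.tsum_eq (derivEquiv G.toHRG X).symm f).symm).trans (ENNReal.tsum_sigma' _)

/-- Evaluation of the system operator on a family given as a sum over derivations. -/
theorem FGG.sysOp_sum_form (φ : ∀ Y : LE, Deriv G.toHRG Y → List W → ℝ≥0∞) (X : LE)
    (ξ : List W) :
    G.sysOp (fun Y ζ => ∑' D : Deriv G.toHRG Y, φ Y D ζ) X ξ =
      ∑' π : {π : G.P // G.lhs π = X},
      ∑' c : (∀ p : {e : ℕ // e ∈ (G.rhs π.1).E ∧ (G.rhs π.1).labE e ∈ G.N},
        Deriv G.toHRG ((G.rhs π.1).labE p.1)),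
      ∑' ξ' : {ξ' : (G.rhs π.1).Assign G.Ω // (G.rhs π.1).extVals ξ'.1 = ξ},
        (∏ᶠ e : {e : ℕ // e ∈ (G.rhs π.1).E ∧ (G.rhs π.1).labE e ∈ G.T},
          (G.F ((G.rhs π.1).labE e.1) ((G.rhs π.1).attVals ξ'.1.1 e.1 e.2.1) : ℝ≥0∞)) *
        ∏ᶠ p : {e : ℕ // e ∈ (G.rhs π.1).E ∧ (G.rhs π.1).labE e ∈ G.N},
          φ _ (c p) ((G.rhs π.1).attVals ξ'.1.1 p.1 p.2.1) := by
  classical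
  rw [FGG.sysOp]
  apply tsum_congr
  intro π
  haveI : Finite {e : ℕ // e ∈ (G.rhs π.1).E ∧ (G.rhs π.1).labE e ∈ G.N} :=
    ((G.rhs π.1).E.finite_toSet.subset fun e he => he.1).to_subtype
  letI : Fintype {e : ℕ // e ∈ (G.rhs π.1).E ∧ (G.rhs π.1).labE e ∈ G.N} := Fintype.ofFinite _
  rw [ENNReal.tsum_comm]
  apply tsum_congr
  intro ξ'
  rw [ENNReal.tsum_mul_left]
  congr 1
  calc ∏ᶠ p : {e : ℕ // e ∈ (G.rhs π.1).E ∧ (G.rhs π.1).labE e ∈ G.N},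
        ∑' D : Deriv G.toHRG ((G.rhs π.1).labE p.1),
          φ _ D ((G.rhs π.1).attVals ξ'.1.1 p.1 p.2.1)
      = ∏ p : {e : ℕ // e ∈ (G.rhs π.1).E ∧ (G.rhs π.1).labE e ∈ G.N},
        ∑' D : Deriv G.toHRG ((G.rhs π.1).labE p.1),
          φ _ D ((G.rhs π.1).attVals ξ'.1.1 p.1 p.2.1) := finprod_eq_prod_of_fintype _
    _ = ∑' c : (∀ p : {e : ℕ // e ∈ (G.rhs π.1).E ∧ (G.rhs π.1).labE e ∈ G.N},
          Deriv G.toHRG ((G.rhs π.1).labE p.1)),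
        ∏ p : {e : ℕ // e ∈ (G.rhs π.1).E ∧ (G.rhs π.1).labE e ∈ G.N},
          φ _ (c p) ((G.rhs π.1).attVals ξ'.1.1 p.1 p.2.1) :=
        (tsum_pi_prod (S := fun p : {e : ℕ // e ∈ (G.rhs π.1).E ∧
            (G.rhs π.1).labE e ∈ G.N} => Deriv G.toHRG ((G.rhs π.1).labE p.1))
          (fun p D => φ _ D ((G.rhs π.1).attVals ξ'.1.1 p.1 p.2.1))).symm
    _ = ∑' c, ∏ᶠ p : {e : ℕ // e ∈ (G.rhs π.1).E ∧ (G.rhs π.1).labE e ∈ G.N},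
          φ _ (c p) ((G.rhs π.1).attVals ξ'.1.1 p.1 p.2.1) :=
        tsum_congr fun c => (finprod_eq_prod_of_fintype _).symm

end FGGLemmas

section Final

variable {W : Type} (G : FGG LV LE htype W)

theorem Deriv.depth_node {G' : HRG LV LE htype} (π : G'.P)
    (c : ∀ e, e ∈ (G'.rhs π).E → (G'.rhs π).labE e ∈ G'.N → Deriv G' ((G'.rhs π).labE e)) :
    (Deriv.node π c).depth = 1 + ((G'.rhs π).E.attach).sup (fun e =>
      if h : (G'.rhs π).labE e.1 ∈ G'.N then (c e.1 e.2 h).depth else 0) := rfl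

theorem Deriv.depth_pos {G' : HRG LV LE htype} {X : LE} (D : Deriv G' X) : 1 ≤ D.depth := by
  cases D
  rw [Deriv.depth_node]
  omega

theorem Deriv.depth_child_le {G' : HRG LV LE htype} {π : G'.P}
    {c : ∀ e, e ∈ (G'.rhs π).E → (G'.rhs π).labE e ∈ G'.N → Deriv G' ((G'.rhs π).labE e)}
    {n : ℕ} (h : (Deriv.node π c).depth ≤ n + 1) (e : ℕ) (he : e ∈ (G'.rhs π).E)
    (hn : (G'.rhs π).labE e ∈ G'.N) : (c e he hn).depth ≤ n := by
  rw [Deriv.depth_node] at h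
  have hle := Finset.le_sup (f := fun e : {x // x ∈ (G'.rhs π).E} =>
    if h : (G'.rhs π).labE e.1 ∈ G'.N then (c e.1 e.2 h).depth else 0)
    (Finset.mem_attach _ (⟨e, he⟩ : {x // x ∈ (G'.rhs π).E}))
  simp only [dif_pos hn] at hle
  omega

theorem FGG.sysOp_mono : Monotone G.sysOp := by
  intro ψ1 ψ2 h X ξ
  refine ENNReal.tsum_le_tsum fun π => ENNReal.tsum_le_tsum fun ξ' => ?_
  refine mul_le_mul_right ?_ _
  haveI : Finite {e : ℕ // e ∈ (G.rhs π.1).E ∧ (G.rhs π.1).labE e ∈ G.N} :=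
    ((G.rhs π.1).E.finite_toSet.subset fun e he => he.1).to_subtype
  letI : Fintype {e : ℕ // e ∈ (G.rhs π.1).E ∧ (G.rhs π.1).labE e ∈ G.N} := Fintype.ofFinite _
  rw [finprod_eq_prod_of_fintype, finprod_eq_prod_of_fintype]
  exact Finset.prod_le_prod' fun p _ => h _ _

theorem FGG.sysOp_psi : G.sysOp G.psi = G.psi := by
  funext X ξ
  refine (FGG.sysOp_sum_form G (fun Y D ζ => G.inner D ζ) X ξ).trans ?_
  refine Eq.trans ?_ (G.tsum_deriv X (fun D => G.inner D ξ)).symm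
  apply tsum_congr
  intro π
  apply tsum_congr
  intro c
  obtain ⟨π, hπ⟩ := π
  subst hπ
  exact (G.inner_node π (fun e he hn => c ⟨e, he, hn⟩) ξ).symm

/-- Depth-truncated sum-product. -/
noncomputable def FGG.psiN (n : ℕ) (X : LE) (ξ : List W) : ℝ≥0∞ :=
  ∑' D : Deriv G.toHRG X, if D.depth ≤ n then G.inner D ξ else 0

theorem FGG.psiN_zero (X : LE) (ξ : List W) : G.psiN 0 X ξ = 0 :=
  (tsum_congr fun D => if_neg (by have := D.depth_pos; omega)).trans tsum_zero

theorem FGG.psiN_succ_le (n : ℕ) (X : LE) (ξ : List W) :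
    G.psiN (n + 1) X ξ ≤ G.sysOp (G.psiN n) X ξ := by
  refine le_trans (le_of_eq (G.tsum_deriv X
      (fun D => if D.depth ≤ n + 1 then G.inner D ξ else 0))) ?_
  refine le_trans ?_ (le_of_eq
    (FGG.sysOp_sum_form G (fun Y D ζ => if D.depth ≤ n then G.inner D ζ else 0) X ξ).symm)
  refine ENNReal.tsum_le_tsum fun π => ENNReal.tsum_le_tsum fun c => ?_
  obtain ⟨π, hπ⟩ := π
  subst hπ
  have heq : (derivEquiv G.toHRG (G.lhs π)).symm ⟨⟨π, rfl⟩, c⟩ =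
      Deriv.node π (fun e he hn => c ⟨e, he, hn⟩) := rfl
  rw [heq]
  by_cases hd : (Deriv.node π (fun e he hn => c ⟨e, he, hn⟩)).depth ≤ n + 1
  · rw [if_pos hd, G.inner_node]
    refine ENNReal.tsum_le_tsum fun ξ' => mul_le_mul_right (le_of_eq ?_) _
    apply finprod_congr
    intro p
    exact (if_pos (Deriv.depth_child_le hd p.1 p.2.1 p.2.2)).symm
  · rw [if_neg hd]
    exact zero_le

theorem FGG.psiN_le_lfp (hmono : Monotone G.sysOp) (n : ℕ) :
    G.psiN n ≤ OrderHom.lfp ⟨G.sysOp, hmono⟩ := by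
  induction n with
  | zero =>
      intro X ξ
      exact le_trans (le_of_eq (G.psiN_zero X ξ)) zero_le
  | succ n ih =>
      intro X ξ
      refine (G.psiN_succ_le n X ξ).trans ?_
      refine le_trans (hmono ih X ξ) ?_
      exact le_of_eq (congrFun (congrFun (OrderHom.map_lfp ⟨G.sysOp, hmono⟩) X) ξ)

end Final

/-- For an FGG with finite variable domains, the value of the
least fixed point of the monotone system operator at a nonterminal `X` and an
assignment `ξ` to the endpoints of `X` equals the sum–product of all `X`-type
derivations whose external nodes are assigned `ξ`. -/
theorem statement1 {LV LE W : Type} {htype : LE → List LV}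
    (G : FGG LV LE htype W) (hfin : ∀ ℓ : LV, (G.Ω ℓ).Finite) :
    ∃ hmono : Monotone G.sysOp,
      ∀ X ∈ G.N, ∀ ξ : List W,
        List.Forall₂ (fun w ℓ => w ∈ G.Ω ℓ) ξ (htype X) →
        OrderHom.lfp ⟨G.sysOp, hmono⟩ X ξ =
          ∑' D : Deriv G.toHRG X,
            ∑' ξ' : {ξ' : (G.toHRG.derive D).Assign G.Ω //
                ((G.toHRG.derive D).ext).map ξ'.1 = ξ},
              (G.toHRG.derive D).weight G.T G.F ξ'.1.1 := by
  refine ⟨G.sysOp_mono, ?_⟩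
  intro X _hX ξ _hξ
  have h1 : OrderHom.lfp ⟨G.sysOp, G.sysOp_mono⟩ ≤ G.psi :=
    OrderHom.lfp_le _ (le_of_eq G.sysOp_psi)
  have h2 : ∀ (X' : LE) (ξ' : List W),
      G.psi X' ξ' ≤ OrderHom.lfp ⟨G.sysOp, G.sysOp_mono⟩ X' ξ' := by
    intro X' ξ'
    have hsum : G.psi X' ξ' = ⨆ s : Finset (Deriv G.toHRG X'), ∑ D ∈ s, G.inner D ξ' :=
      ENNReal.tsum_eq_iSup_sum
    rw [hsum]
    refine iSup_le fun s => ?_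
    classical
    set n := s.sup (fun D => D.depth) with hn
    have : (∑ D ∈ s, G.inner D ξ') = ∑ D ∈ s, if D.depth ≤ n then G.inner D ξ' else 0 :=
      Finset.sum_congr rfl fun D hD => (if_pos (Finset.le_sup hD)).symm
    rw [this]
    refine le_trans (ENNReal.sum_le_tsum s) ?_
    exact G.psiN_le_lfp G.sysOp_mono n X' ξ'
  exact le_antisymm (h1 X ξ) (h2 X ξ)
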